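/- Assume a_{j,k} = 1 for all j,k ∈ ℕ, and let c be a mild solution of the RBK system on [0,∞). Define ν(t) := Σ_{j=1}^∞ c_j(t) and ν_odd(t) := Σ_{j=1}^∞ c_{2j−1}(t). Then for all t ≥ 0: (a) ν_odd(t) = ν_odd(0)/(1 + ν_odd(0)·t); (b) ν(0)/(1 + ν(0)·t) ≤ ν(t) ≤ ν(0)/(1 + (ν(0)/2)·t). -/

import Mathlib

open MeasureTheory Filter Topology
open scoped ENNReal

/-- Membership in `X₁⁺`: sequences `(c_j)_{j≥1}` (encoded as `c (j+1)` for `j : ℕ`)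
with nonnegative entries and `Σ_{j≥1} j c_j < ∞`. -/
def MemX1plus (c : ℕ → ℝ) : Prop :=
  (∀ j : ℕ, 0 ≤ c (j + 1)) ∧ Summable (fun j : ℕ => ((j : ℝ) + 1) * c (j + 1))

/-- The norm `‖c‖₁ = Σ_{j≥1} j c_j`. -/
noncomputable def norm1 (c : ℕ → ℝ) : ℝ := ∑' j : ℕ, ((j : ℝ) + 1) * c (j + 1)

/-- A (mild) solution of the RBK coagulation system on `[0,T)`, `T ∈ (0,∞]`:
(i) each `c_j` is continuous, `c(t) ∈ X₁⁺` and `sup_t ‖c(t)‖₁ < ∞`;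
(ii) for each `j` the loss series is summable and `∫₀ᵗ Σ_k a_{j,k} c_k < ∞`;
(iii) `c_j(t) = c_j(0) + ∫₀ᵗ [Σ_k a_{j+k,k} c_{j+k} c_k − Σ_k a_{j,k} c_j c_k] ds`. -/
structure IsMildSolution (a : ℕ → ℕ → ℝ) (T : ℝ≥0∞) (c : ℝ → ℕ → ℝ) : Prop where
  mem : ∀ t : ℝ, 0 ≤ t → ENNReal.ofReal t < T → MemX1plus (c t)
  cont : ∀ j : ℕ, ContinuousOn (fun t => c t (j + 1))
      {t : ℝ | 0 ≤ t ∧ ENNReal.ofReal t < T}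
  bdd : ∃ B : ℝ, ∀ t : ℝ, 0 ≤ t → ENNReal.ofReal t < T → norm1 (c t) ≤ B
  loss_summable : ∀ (j : ℕ) (s : ℝ), 0 ≤ s → ENNReal.ofReal s < T →
      Summable (fun k : ℕ => a (j + 1) (k + 1) * c s (k + 1))
  loss_integrable : ∀ (j : ℕ) (t : ℝ), 0 ≤ t → ENNReal.ofReal t < T →
      IntervalIntegrable (fun s => ∑' k : ℕ, a (j + 1) (k + 1) * c s (k + 1)) volume 0 t
  eqn : ∀ (j : ℕ) (t : ℝ), 0 ≤ t → ENNReal.ofReal t < T →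
      c t (j + 1) = c 0 (j + 1) + ∫ s in (0:ℝ)..t,
        ((∑' k : ℕ, a (j + 1 + (k + 1)) (k + 1) * c s (j + 1 + (k + 1)) * c s (k + 1)) -
         (∑' k : ℕ, a (j + 1) (k + 1) * c s (j + 1) * c s (k + 1)))

/-!
Summing the equations over `j` gives `ν' = Σ_{j,k} c_{j+k} c_k - ν²`: the absolute values of the
right-hand sides sum to at most `2 ν²`, which justifies exchanging sum and integral, and the tail
bound `Σ_{j ≥ N} c_j ≤ ‖c‖₁ / N` makes all the series involved continuous in time. The gain double
sum runs over the pairs `(a, b)` with `a > b`, so it equals `(ν² - Σ_k c_k²) / 2`; hence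
`ν' = -(ν² + Σ_k c_k²) / 2` and `ν² / 2 ≤ -ν' ≤ ν²`. Summing over odd `j` only, the gain runs over
the pairs of opposite parity, so it equals `ν_odd ν_even` and `ν_odd' = ν_odd ν_even - ν_odd ν =
-ν_odd²`. Comparison with the solutions `y₀ / (1 + κ y₀ t)` of `y' = -κ y²` gives both statements.
-/

open Set Function

theorem intervalIntegral_tsum_of_tsum_norm_le {f : ℕ → ℝ → ℝ} {a b K : ℝ} (hab : a ≤ b)
    (hf : ∀ i, ContinuousOn (f i) (Icc a b)) (hs : ∀ x ∈ Ioc a b, Summable (fun i => ‖f i x‖))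
    (hK : ∀ x ∈ Ioc a b, ∑' i, ‖f i x‖ ≤ K) :
    ∫ x in a..b, ∑' i, f i x = ∑' i, ∫ x in a..b, f i x := by
  have hmeas : ∀ i, AEStronglyMeasurable (f i) (volume.restrict (Ioc a b)) := fun i =>
    ((hf i).mono Ioc_subset_Icc_self).aestronglyMeasurable measurableSet_Ioc
  simp only [intervalIntegral.integral_of_le hab]
  refine integral_tsum hmeas ?_
  rw [← lintegral_tsum fun i => (hmeas i).enorm]
  refine ne_top_of_le_ne_top (b := ∫⁻ _ in Ioc a b, ENNReal.ofReal K) ?_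
    (setLIntegral_mono measurable_const fun x hx => ?_)
  · simpa [Real.volume_Ioc] using ENNReal.mul_ne_top ENNReal.ofReal_ne_top ENNReal.ofReal_ne_top
  · simp_rw [← ofReal_norm]
    rw [← ENNReal.ofReal_tsum_of_nonneg (fun i => norm_nonneg _) (hs x hx)]
    exact ENNReal.ofReal_le_ofReal (hK x hx)

theorem continuousOn_tsum_of_norm_tsum_tail_le {X : Type*} [TopologicalSpace X] {f : ℕ → X → ℝ}
    {S : Set X} {C : ℝ} (hf : ∀ j, ContinuousOn (f j) S) (hs : ∀ x ∈ S, Summable (f · x))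
    (htail : ∀ N : ℕ, ∀ x ∈ S, ‖∑' j, f (j + N) x‖ ≤ C / (N + 1)) :
    ContinuousOn (fun x => ∑' j, f j x) S := by
  have hC : Tendsto (fun N : ℕ => C / ((N : ℝ) + 1)) atTop (𝓝 0) := by
    simpa [comp_def] using (tendsto_const_div_atTop_nhds_zero_nat C).comp (tendsto_add_atTop_nat 1)
  refine TendstoUniformlyOn.continuousOn (F := fun N x => ∑ j ∈ Finset.range N, f j x)
    (p := atTop) ?_ (Frequently.of_forall fun N => continuousOn_finsetSum _ fun j _ => hf j)
  rw [Metric.tendstoUniformlyOn_iff]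
  intro ε hε
  filter_upwards [hC.eventually (eventually_lt_nhds hε)] with N hN x hx
  rw [dist_eq_norm, ← (hs x hx).sum_add_tsum_nat_add N, add_sub_cancel_left]
  exact (htail N x hx).trans_lt hN

theorem le_of_hasDerivWithinAt_of_antitoneOn {φ u u' v v' : ℝ → ℝ} {a b : ℝ} {s : Set ℝ}
    (hφ : AntitoneOn φ s)
    (hu : ContinuousOn u (Icc a b)) (hu' : ∀ x ∈ Ico a b, HasDerivWithinAt u (u' x) (Ici x) x)
    (hv : ContinuousOn v (Icc a b)) (hv' : ∀ x ∈ Ico a b, HasDerivWithinAt v (v' x) (Ici x) x)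
    (hus : ∀ x ∈ Icc a b, u x ∈ s) (hvs : ∀ x ∈ Icc a b, v x ∈ s)
    (hsub : ∀ x ∈ Ico a b, u' x ≤ φ (u x)) (hsup : ∀ x ∈ Ico a b, φ (v x) ≤ v' x)
    (ha : u a ≤ v a) : ∀ x ∈ Icc a b, u x ≤ v x := by
  intro x hx
  refine le_of_forall_pos_le_add fun δ hδ => ?_
  set ε := δ / (1 + (x - a)) with hε_def
  have hε : 0 < ε := div_pos hδ (by linarith [hx.1])
  -- the perturbation `ε (1 + (y - a))` turns the non-strict comparison into a strict one
  have key := image_le_of_deriv_right_lt_deriv_boundary' hu hu'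
    (B := fun y => v y + ε * (1 + (y - a))) (B' := fun y => v' y + ε)
    (by linarith) (hv.add (by fun_prop))
    (fun y hy => (hv' y hy).add (by
      simpa using (((hasDerivAt_id y).sub_const a).const_add 1 |>.const_mul ε).hasDerivWithinAt))
    (fun y hy hcontact => by
      have hy' : y ∈ Icc a b := Ico_subset_Icc_self hy
      have hvu : v y ≤ u y := by rw [hcontact]; nlinarith [hy.1]
      linarith [hsub y hy, hsup y hy, hφ (hvs y hy') (hus y hy') hvu]) hx
  calc u x ≤ v x + ε * (1 + (x - a)) := key
    _ = v x + δ := by rw [hε_def, div_mul_cancel₀ _ (by linarith [hx.1])]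

theorem hasDerivAt_div_one_add_mul (a κ x : ℝ) (h : 1 + κ * a * x ≠ 0) :
    HasDerivAt (fun y => a / (1 + κ * a * y)) (-κ * (a / (1 + κ * a * x)) ^ 2) x := by
  have hd : HasDerivAt (fun y => 1 + κ * a * y) (κ * a) x := by
    simpa using ((hasDerivAt_id x).const_mul (κ * a)).const_add 1
  refine ((hasDerivAt_const x a).div hd h).congr_deriv ?_
  field_simp
  ring

theorem hasDerivWithinAt_Ici_of_eq_add_integral {F g : ℝ → ℝ} (hg : ContinuousOn g (Ici 0))
    (hFg : ∀ u ≥ 0, F u = F 0 + ∫ s in (0 : ℝ)..u, g s) {x : ℝ} (hx : 0 ≤ x) :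
    HasDerivWithinAt F (g x) (Ici x) x := by
  have hint : IntervalIntegrable g volume 0 x :=
    (hg.mono (by rw [uIcc_of_le hx]; exact Icc_subset_Ici_self)).intervalIntegrable
  have hgx : ContinuousOn g (Ioi x) := hg.mono (Ioi_subset_Ici_self.trans (Ici_subset_Ici.mpr hx))
  refine ((intervalIntegral.integral_hasDerivWithinAt_right hint
    (hgx.stronglyMeasurableAtFilter_nhdsWithin measurableSet_Ioi x)
    ((hg x hx).mono (Ioi_subset_Ici_self.trans (Ici_subset_Ici.mpr hx)))).const_add (F 0)).congr
    (fun u hu => hFg u (hx.trans hu)) (hFg x hx)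

section Riccati

variable {F g : ℝ → ℝ} {κ t : ℝ}

theorem antitoneOn_neg_mul_sq (hκ : 0 ≤ κ) : AntitoneOn (fun w : ℝ => -κ * w ^ 2) (Ici 0) :=
  fun a ha b _ hab => by
    have : a ^ 2 ≤ b ^ 2 := pow_le_pow_left₀ ha hab 2
    simp only [neg_mul, neg_le_neg_iff]
    exact mul_le_mul_of_nonneg_left this hκ

theorem hasDerivWithinAt_div_one_add_mul (hκ : 0 ≤ κ) {a x : ℝ} (ha : 0 ≤ a) (hx : 0 ≤ x)
    (s : Set ℝ) :
    HasDerivWithinAt (fun y => a / (1 + κ * a * y)) (-κ * (a / (1 + κ * a * x)) ^ 2) s x :=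
  (hasDerivAt_div_one_add_mul a κ x (by positivity)).hasDerivWithinAt

theorem continuousOn_div_one_add_mul (hκ : 0 ≤ κ) {a : ℝ} (ha : 0 ≤ a) :
    ContinuousOn (fun y => a / (1 + κ * a * y)) (Ici 0) :=
  fun _ hx => (hasDerivWithinAt_div_one_add_mul hκ ha hx _).continuousWithinAt

theorem le_div_one_add_mul_of_eq_add_integral (hF : ContinuousOn F (Ici 0))
    (hg : ContinuousOn g (Ici 0)) (hFg : ∀ u ≥ 0, F u = F 0 + ∫ s in (0 : ℝ)..u, g s)
    (hF0 : ∀ u ≥ 0, 0 ≤ F u) (hκ : 0 ≤ κ) (hgF : ∀ u ≥ 0, g u ≤ -κ * F u ^ 2)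
    (ht : 0 ≤ t) : F t ≤ F 0 / (1 + κ * F 0 * t) := by
  have h0 := hF0 0 le_rfl
  refine le_of_hasDerivWithinAt_of_antitoneOn (antitoneOn_neg_mul_sq hκ)
    (hF.mono Icc_subset_Ici_self) (fun x hx => hasDerivWithinAt_Ici_of_eq_add_integral hg hFg hx.1)
    ((continuousOn_div_one_add_mul hκ h0).mono Icc_subset_Ici_self)
    (fun x hx => hasDerivWithinAt_div_one_add_mul hκ h0 hx.1 _) (fun x hx => hF0 x hx.1)
    (fun x hx => mem_Ici.2 (by have := hx.1; positivity)) (fun x hx => hgF x hx.1)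
    (fun _ _ => le_rfl)
    (by simp) t ⟨ht, le_rfl⟩

theorem div_one_add_mul_le_of_eq_add_integral (hF : ContinuousOn F (Ici 0))
    (hg : ContinuousOn g (Ici 0)) (hFg : ∀ u ≥ 0, F u = F 0 + ∫ s in (0 : ℝ)..u, g s)
    (hF0 : ∀ u ≥ 0, 0 ≤ F u) (hκ : 0 ≤ κ) (hgF : ∀ u ≥ 0, -κ * F u ^ 2 ≤ g u)
    (ht : 0 ≤ t) : F 0 / (1 + κ * F 0 * t) ≤ F t := by
  have h0 := hF0 0 le_rfl
  refine le_of_hasDerivWithinAt_of_antitoneOn (antitoneOn_neg_mul_sq hκ)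
    ((continuousOn_div_one_add_mul hκ h0).mono Icc_subset_Ici_self)
    (fun x hx => hasDerivWithinAt_div_one_add_mul hκ h0 hx.1 _)
    (hF.mono Icc_subset_Ici_self) (fun x hx => hasDerivWithinAt_Ici_of_eq_add_integral hg hFg hx.1)
    (fun x hx => mem_Ici.2 (by have := hx.1; positivity)) (fun x hx => hF0 x hx.1)
    (fun _ _ => le_rfl) (fun x hx => hgF x hx.1) (by simp) t ⟨ht, le_rfl⟩

end Riccati

section PairSums

variable {E : Type*} [NormedAddCommGroup E] [CompleteSpace E]

theorem tsum_eq_tsum_comp_add_tsum_comp {α β γ : Type*} {P : α → E} (hP : Summable P)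
    {e₁ : β → α} {e₂ : γ → α} (h₁ : Injective e₁) (h₂ : Injective e₂)
    (h : range e₂ = (range e₁)ᶜ) :
    ∑' a, P a = ∑' b, P (e₁ b) + ∑' c, P (e₂ c) := by
  rw [← tsum_range P h₁, ← tsum_range P h₂, h,
    (hP.subtype _).tsum_add_tsum_compl (hP.subtype _)]

theorem tsum_prod_eq_tsum_gt_add_tsum_le {P : ℕ × ℕ → E} (hP : Summable P) :
    ∑' p, P p = ∑' p : ℕ × ℕ, P (p.1 + 1 + p.2, p.2) + ∑' p : ℕ × ℕ, P (p.2, p.1 + p.2) := by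
  have h₁ : Injective (fun p : ℕ × ℕ => (p.1 + 1 + p.2, p.2)) := fun p q h => by
    simp only [Prod.mk.injEq] at h; exact Prod.ext (by omega) h.2
  have h₂ : Injective (fun p : ℕ × ℕ => (p.2, p.1 + p.2)) := fun p q h => by
    simp only [Prod.mk.injEq] at h; exact Prod.ext (by omega) h.1
  refine tsum_eq_tsum_comp_add_tsum_comp hP h₁ h₂ ?_
  ext ⟨a, b⟩
  simp only [mem_range, mem_compl_iff, Prod.exists, Prod.mk.injEq, not_exists, not_and]
  refine ⟨fun ⟨j, k, hk, hj⟩ j' k' hj' hk' => by omega, fun h => ⟨b - a, a, rfl, ?_⟩⟩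
  by_contra hab
  exact h (a - b - 1) b (by omega) rfl

end PairSums

section ShiftProducts

-- With `g i = c_{i+1}`, `∑' k, g (j + 1 + k) * g k` is the gain term `Σ_k c_{j+1+k} c_k` of the
-- equation for `c_{j+1}`.
variable {g : ℕ → ℝ}

theorem summable_prod_shift_mul (hg : Summable (‖g ·‖)) {n : ℕ} (hn : 0 < n) :
    Summable (fun p : ℕ × ℕ => g (n * p.1 + 1 + p.2) * g p.2) := by
  have hinj : Injective (fun p : ℕ × ℕ => (n * p.1 + 1 + p.2, p.2)) := fun p q h => by
    simp only [Prod.mk.injEq] at h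
    exact Prod.ext (Nat.eq_of_mul_eq_mul_left hn (by omega)) h.2
  exact (summable_mul_of_summable_norm hg hg).comp_injective hinj

theorem summable_tsum_shift_mul (hg : Summable (‖g ·‖)) {n : ℕ} (hn : 0 < n) :
    Summable (fun j => ∑' k, g (n * j + 1 + k) * g k) :=
  (summable_prod_shift_mul hg hn).prod

theorem sq_tsum_eq_two_mul_tsum_tsum_shift_mul_add (hg : Summable (‖g ·‖)) :
    (∑' i, g i) ^ 2 = 2 * ∑' j, ∑' k, g (j + 1 + k) * g k + ∑' k, g k * g k := by
  have hP := summable_mul_of_summable_norm hg hg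
  have hinj : Injective (fun p : ℕ × ℕ => (p.2, p.1 + p.2)) := fun p q h => by
    simp only [Prod.mk.injEq] at h; exact Prod.ext (by omega) h.1
  have hlower : Summable (fun p : ℕ × ℕ => g p.2 * g (p.1 + p.2)) := hP.comp_injective hinj
  have h₁ : Injective (fun k : ℕ => (0, k)) := fun k l h => by simpa using h
  have h₂ : Injective (fun p : ℕ × ℕ => (p.1 + 1, p.2)) := fun p q h => by
    simp only [Prod.mk.injEq] at h; exact Prod.ext (by omega) h.2
  have hdiag : ∑' p : ℕ × ℕ, g p.2 * g (p.1 + p.2)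
      = ∑' k, g k * g k + ∑' p : ℕ × ℕ, g (p.1 + 1 + p.2) * g p.2 := by
    rw [tsum_eq_tsum_comp_add_tsum_comp hlower h₁ h₂]
    · simp only [zero_add]
      exact congrArg _ (tsum_congr fun p => mul_comm _ _)
    · ext ⟨a, b⟩
      simp only [mem_range, mem_compl_iff, Prod.exists, Prod.mk.injEq, not_exists]
      refine ⟨fun ⟨j, k, hj, hk⟩ l ⟨hl, _⟩ => by omega, fun h => ⟨a - 1, b, ?_, rfl⟩⟩
      by_contra ha
      exact h b ⟨by omega, rfl⟩
  have hshift := summable_prod_shift_mul hg one_pos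
  simp only [one_mul] at hshift
  rw [sq, tsum_mul_tsum_of_summable_norm hg hg, tsum_prod_eq_tsum_gt_add_tsum_le hP, hdiag,
    hshift.tsum_prod]
  ring

theorem tsum_tsum_odd_shift_mul (hg : Summable (‖g ·‖)) :
    ∑' j, ∑' k, g (2 * j + 1 + k) * g k = (∑' i, g (2 * i)) * ∑' i, g (2 * i + 1) := by
  -- Both sides sum `g a * g b` over the unordered pairs `{a, b}` of opposite parity: the left
  -- side split by the parity of the smaller element, the right side by which of `2 i`, `2 k + 1`
  -- is larger.
  have he : Injective (2 * · : ℕ → ℕ) := fun a b h => by simp only at h; omega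
  have ho : Injective (2 * · + 1 : ℕ → ℕ) := fun a b h => by simp only at h; omega
  have hE : Summable (fun i => ‖g (2 * i)‖) := hg.comp_injective he
  have hO : Summable (fun i => ‖g (2 * i + 1)‖) := hg.comp_injective ho
  have h₁ : Injective (fun p : ℕ × ℕ => (p.1, 2 * p.2)) := fun p q h => by
    simp only [Prod.mk.injEq] at h; exact Prod.ext h.1 (by omega)
  have h₂ : Injective (fun p : ℕ × ℕ => (p.1, 2 * p.2 + 1)) := fun p q h => by
    simp only [Prod.mk.injEq] at h; exact Prod.ext h.1 (by omega)
  have hparity : range (fun p : ℕ × ℕ => (p.1, 2 * p.2 + 1))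
      = (range fun p : ℕ × ℕ => (p.1, 2 * p.2))ᶜ := by
    ext ⟨a, b⟩
    simp only [mem_range, mem_compl_iff, Prod.exists, Prod.mk.injEq, not_exists, not_and]
    refine ⟨fun ⟨j, k, hj, hk⟩ j' k' _ hk' => by omega, fun h => ⟨a, b / 2, rfl, ?_⟩⟩
    by_contra hb
    exact h a (b / 2) rfl (by omega)
  have hsplit := tsum_eq_tsum_comp_add_tsum_comp (summable_prod_shift_mul hg two_pos) h₁ h₂ hparity
  have hQ : Summable (fun p : ℕ × ℕ => g (2 * p.1) * g (2 * p.2 + 1)) :=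
    summable_mul_of_summable_norm hE hO
  rw [← (summable_prod_shift_mul hg two_pos).tsum_prod, hsplit,
    tsum_mul_tsum_of_summable_norm hE hO, tsum_prod_eq_tsum_gt_add_tsum_le hQ, add_comm]
  congr 1
  · exact tsum_congr fun p => by dsimp only; congr 2; ring
  · exact tsum_congr fun p => by dsimp only; rw [mul_comm (g _)]; congr 2; ring

theorem tsum_shift_mul_sub_mul_tsum (hg : Summable (‖g ·‖)) :
    ∑' j, (∑' k, g (j + 1 + k) * g k - g j * ∑' k, g k)
      = -((∑' k, g k) ^ 2 + ∑' k, g k * g k) / 2 := by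
  have hG : Summable (fun j => ∑' k, g (j + 1 + k) * g k) := by
    simpa using summable_tsum_shift_mul hg one_pos
  rw [hG.tsum_sub (hg.of_norm.mul_right _), tsum_mul_right,
    ← sq, sq_tsum_eq_two_mul_tsum_tsum_shift_mul_add hg]
  ring

theorem tsum_odd_shift_mul_sub_mul_tsum (hg : Summable (‖g ·‖)) :
    ∑' j, (∑' k, g (2 * j + 1 + k) * g k - g (2 * j) * ∑' k, g k) = -(∑' j, g (2 * j)) ^ 2 := by
  have he : Summable (fun j => g (2 * j)) :=
    (hg.comp_injective (fun a b h => by simpa using h : Injective (2 * · : ℕ → ℕ))).of_norm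
  have ho : Summable (fun j => g (2 * j + 1)) :=
    (hg.comp_injective (fun a b h => by simpa using h : Injective (2 * · + 1 : ℕ → ℕ))).of_norm
  rw [(summable_tsum_shift_mul hg two_pos).tsum_sub (he.mul_right _), tsum_mul_right,
    tsum_tsum_odd_shift_mul hg, ← tsum_even_add_odd he ho]
  ring

theorem norm_shift_mul_sub_mul_tsum_le (hg0 : ∀ i, 0 ≤ g i) (i : ℕ) :
    ‖∑' k, g (i + 1 + k) * g k - g i * ∑' k, g k‖
      ≤ ∑' k, g (i + 1 + k) * g k + g i * ∑' k, g k := by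
  refine (norm_sub_le _ _).trans_eq ?_
  rw [Real.norm_of_nonneg (tsum_nonneg fun k => mul_nonneg (hg0 _) (hg0 k)),
    Real.norm_of_nonneg (mul_nonneg (hg0 i) (tsum_nonneg hg0))]

theorem summable_norm_comp_shift_mul_sub_mul_tsum (hg0 : ∀ i, 0 ≤ g i) (hg : Summable g)
    {m : ℕ → ℕ} (hm : Injective m) :
    Summable (fun j => ‖∑' k, g (m j + 1 + k) * g k - g (m j) * ∑' k, g k‖) := by
  have hgn : Summable (‖g ·‖) := by simpa only [Real.norm_of_nonneg (hg0 _)] using hg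
  have hu := ((summable_tsum_shift_mul hgn one_pos).add
    (hg.mul_right (∑' k, g k))).comp_injective hm
  simp only [one_mul] at hu
  exact hu.of_nonneg_of_le (fun j => norm_nonneg _)
    fun j => norm_shift_mul_sub_mul_tsum_le hg0 (m j)

theorem tsum_norm_comp_shift_mul_sub_mul_tsum_le (hg0 : ∀ i, 0 ≤ g i) (hg : Summable g)
    {m : ℕ → ℕ} (hm : Injective m) :
    ∑' j, ‖∑' k, g (m j + 1 + k) * g k - g (m j) * ∑' k, g k‖ ≤ 2 * (∑' k, g k) ^ 2 := by
  have hgn : Summable (‖g ·‖) := by simpa only [Real.norm_of_nonneg (hg0 _)] using hg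
  have hG : Summable (fun j => ∑' k, g (j + 1 + k) * g k) := by
    simpa using summable_tsum_shift_mul hgn one_pos
  have hu := hG.add (hg.mul_right (∑' k, g k))
  have hQ : 0 ≤ ∑' k, g k * g k := tsum_nonneg fun k => mul_nonneg (hg0 k) (hg0 k)
  calc _ ≤ ∑' j, (∑' k, g (m j + 1 + k) * g k + g (m j) * ∑' k, g k) :=
        (summable_norm_comp_shift_mul_sub_mul_tsum hg0 hg hm).tsum_le_tsum
          (fun j => norm_shift_mul_sub_mul_tsum_le hg0 (m j)) (hu.comp_injective hm)
    _ ≤ ∑' j, (∑' k, g (j + 1 + k) * g k + g j * ∑' k, g k) :=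
        (hu.comp_injective hm).tsum_le_tsum_of_inj m hm
          (fun j _ => add_nonneg (tsum_nonneg fun k => mul_nonneg (hg0 _) (hg0 k))
            (mul_nonneg (hg0 j) (tsum_nonneg hg0))) (fun j => le_rfl) hu
    _ = ∑' j, ∑' k, g (j + 1 + k) * g k + (∑' k, g k) ^ 2 := by
      rw [hG.tsum_add (hg.mul_right _), tsum_mul_right, sq]
    _ ≤ 2 * (∑' k, g k) ^ 2 := by
      linarith [sq_tsum_eq_two_mul_tsum_tsum_shift_mul_add hgn, sq_nonneg (∑' k, g k)]

theorem tsum_mul_self_le_sq_tsum (hg0 : ∀ i, 0 ≤ g i) (hg : Summable g) :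
    ∑' k, g k * g k ≤ (∑' k, g k) ^ 2 := by
  have hgn : Summable (‖g ·‖) := by simpa only [Real.norm_of_nonneg (hg0 _)] using hg
  have hG : 0 ≤ ∑' j, ∑' k, g (j + 1 + k) * g k :=
    tsum_nonneg fun j => tsum_nonneg fun k => mul_nonneg (hg0 _) (hg0 k)
  linarith [sq_tsum_eq_two_mul_tsum_tsum_shift_mul_add hgn]

end ShiftProducts

namespace MemX1plus

variable {c : ℕ → ℝ}

theorem summable (h : MemX1plus c) : Summable (fun j => c (j + 1)) :=
  h.2.of_nonneg_of_le h.1 fun j => le_mul_of_one_le_left (h.1 j) (by simp)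

theorem summable_norm (h : MemX1plus c) : Summable (fun j => ‖c (j + 1)‖) := by
  simpa only [Real.norm_of_nonneg (h.1 _)] using h.summable

theorem le_norm1 (h : MemX1plus c) (j : ℕ) : c (j + 1) ≤ norm1 c :=
  (le_mul_of_one_le_left (h.1 j) (by simp)).trans
    (h.2.le_tsum j fun i _ => mul_nonneg (by positivity) (h.1 i))

theorem tsum_comp_le_norm1_div (h : MemX1plus c) {m : ℕ → ℕ} (hm : Injective m) {N : ℕ}
    (hN : ∀ j, N ≤ m j) : ∑' j, c (m j + 1) ≤ norm1 c / (N + 1) := by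
  have hN1 : (0 : ℝ) < N + 1 := by positivity
  have hterm : ∀ j, c (m j + 1) ≤ ((m j : ℝ) + 1) * c (m j + 1) / (N + 1) := fun j => by
    rw [le_div_iff₀ hN1, mul_comm]
    exact mul_le_mul_of_nonneg_right (by exact_mod_cast Nat.succ_le_succ (hN j)) (h.1 _)
  have hw : Summable (fun j => ((m j : ℝ) + 1) * c (m j + 1) / (N + 1)) :=
    (h.2.comp_injective hm).div_const _
  calc ∑' j, c (m j + 1) ≤ ∑' j, ((m j : ℝ) + 1) * c (m j + 1) / (N + 1) :=
        (hw.of_nonneg_of_le (fun j => h.1 _) hterm).tsum_le_tsum hterm hw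
    _ = (∑' j, ((m j : ℝ) + 1) * c (m j + 1)) / (N + 1) := tsum_div_const
    _ ≤ norm1 c / (N + 1) := by
      gcongr
      exact (h.2.comp_injective hm).tsum_le_tsum_of_inj m hm
        (fun i _ => mul_nonneg (by positivity) (h.1 i)) (fun j => le_rfl) h.2

theorem tsum_le_norm1 (h : MemX1plus c) : ∑' j, c (j + 1) ≤ norm1 c := by
  simpa using h.tsum_comp_le_norm1_div injective_id (N := 0) fun j => Nat.zero_le j

end MemX1plus

section BoundedFamily

variable {X : Type*} [TopologicalSpace X] {c : X → ℕ → ℝ} {S : Set X} {B : ℝ}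

theorem continuousOn_tsum_comp_of_norm1_le (hmem : ∀ x ∈ S, MemX1plus (c x))
    (hB : ∀ x ∈ S, norm1 (c x) ≤ B) (hcont : ∀ j, ContinuousOn (fun x => c x (j + 1)) S)
    {m : ℕ → ℕ} (hm : StrictMono m) : ContinuousOn (fun x => ∑' j, c x (m j + 1)) S := by
  refine continuousOn_tsum_of_norm_tsum_tail_le (C := B) (fun j => hcont (m j))
    (fun x hx => (hmem x hx).summable.comp_injective hm.injective) fun N x hx => ?_
  rw [Real.norm_of_nonneg (tsum_nonneg fun j => (hmem x hx).1 _)]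
  refine ((hmem x hx).tsum_comp_le_norm1_div (hm.injective.comp (add_left_injective N))
    fun j => (Nat.le_add_left N j).trans (hm.id_le _)).trans ?_
  gcongr
  exact hB x hx

theorem continuousOn_tsum_shift_mul_of_norm1_le (hmem : ∀ x ∈ S, MemX1plus (c x))
    (hB : ∀ x ∈ S, norm1 (c x) ≤ B) (hcont : ∀ j, ContinuousOn (fun x => c x (j + 1)) S)
    (i : ℕ) : ContinuousOn (fun x => ∑' k, c x (i + (k + 1)) * c x (k + 1)) S := by
  refine continuousOn_tsum_of_norm_tsum_tail_le (C := B * B)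
    (fun k => (hcont (i + k)).mul (hcont k)) (fun x hx => ?_) fun N x hx => ?_
  · have h := hmem x hx
    exact (h.summable.mul_left (norm1 (c x))).of_nonneg_of_le
      (fun k => mul_nonneg (h.1 _) (h.1 k))
      fun k => mul_le_mul_of_nonneg_right (h.le_norm1 _) (h.1 k)
  have h := hmem x hx
  have hB0 : 0 ≤ norm1 (c x) := (h.1 0).trans (h.le_norm1 0)
  have htail : Summable (fun k => c x (k + N + 1)) :=
    h.summable.comp_injective (add_left_injective N)
  rw [Real.norm_of_nonneg (tsum_nonneg fun k =>
    (mul_nonneg (h.1 _) (h.1 _) : 0 ≤ c x (i + (k + N + 1)) * c x (k + N + 1))), mul_div_assoc]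
  calc ∑' k, c x (i + (k + N + 1)) * c x (k + N + 1) ≤ ∑' k, norm1 (c x) * c x (k + N + 1) :=
        (htail.mul_left _).of_nonneg_of_le (fun k => mul_nonneg (h.1 _) (h.1 _))
          (fun k => mul_le_mul_of_nonneg_right (h.le_norm1 _) (h.1 _)) |>.tsum_le_tsum
          (fun k => mul_le_mul_of_nonneg_right (h.le_norm1 _) (h.1 _)) (htail.mul_left _)
    _ = norm1 (c x) * ∑' k, c x (k + N + 1) := tsum_mul_left
    _ ≤ B * (B / (N + 1)) := by
      refine mul_le_mul (hB x hx) ?_ (tsum_nonneg fun k => h.1 _) (hB0.trans (hB x hx))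
      refine (h.tsum_comp_le_norm1_div (add_left_injective N) (Nat.le_add_left N)).trans ?_
      gcongr
      exact hB x hx

end BoundedFamily

namespace IsMildSolution

variable {a : ℕ → ℕ → ℝ} {c : ℝ → ℕ → ℝ}

theorem memX1plus (hc : IsMildSolution a ⊤ c) {t : ℝ} (ht : 0 ≤ t) : MemX1plus (c t) :=
  hc.mem t ht ENNReal.ofReal_lt_top

theorem continuousOn_Ici (hc : IsMildSolution a ⊤ c) (j : ℕ) :
    ContinuousOn (fun t => c t (j + 1)) (Ici 0) := by
  simpa [ENNReal.ofReal_lt_top, Ici_def] using hc.cont j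

theorem exists_norm1_le (hc : IsMildSolution a ⊤ c) : ∃ B, ∀ t ∈ Ici (0 : ℝ), norm1 (c t) ≤ B :=
  let ⟨B, hB⟩ := hc.bdd
  ⟨B, fun t ht => hB t ht ENNReal.ofReal_lt_top⟩

theorem continuousOn_tsum_comp (hc : IsMildSolution a ⊤ c) {m : ℕ → ℕ} (hm : StrictMono m) :
    ContinuousOn (fun t => ∑' j, c t (m j + 1)) (Ici 0) :=
  let ⟨_, hB⟩ := hc.exists_norm1_le
  continuousOn_tsum_comp_of_norm1_le (fun _ ht => hc.memX1plus ht) hB hc.continuousOn_Ici hm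

theorem continuousOn_tsum_shift_mul (hc : IsMildSolution a ⊤ c) (i : ℕ) :
    ContinuousOn (fun t => ∑' k, c t (i + (k + 1)) * c t (k + 1)) (Ici 0) :=
  let ⟨_, hB⟩ := hc.exists_norm1_le
  continuousOn_tsum_shift_mul_of_norm1_le (fun _ ht => hc.memX1plus ht) hB hc.continuousOn_Ici i

theorem eq_add_integral (hc : IsMildSolution (fun _ _ => 1) ⊤ c) (j : ℕ) {t : ℝ} (ht : 0 ≤ t) :
    c t (j + 1) = c 0 (j + 1) + ∫ s in (0 : ℝ)..t,
      (∑' k, c s (j + 1 + (k + 1)) * c s (k + 1) - c s (j + 1) * ∑' k, c s (k + 1)) := by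
  simpa only [one_mul, tsum_mul_left] using hc.eqn j t ht ENNReal.ofReal_lt_top

theorem tsum_comp_eq_add_integral (hc : IsMildSolution (fun _ _ => 1) ⊤ c) {m : ℕ → ℕ}
    (hm : Injective m) {t : ℝ} (ht : 0 ≤ t) :
    ∑' j, c t (m j + 1) = ∑' j, c 0 (m j + 1) + ∫ s in (0 : ℝ)..t, ∑' j,
      (∑' k, c s (m j + 1 + (k + 1)) * c s (k + 1) - c s (m j + 1) * ∑' k, c s (k + 1)) := by
  obtain ⟨B, hB⟩ := hc.exists_norm1_le
  have hν : ContinuousOn (fun s => ∑' k, c s (k + 1)) (Ici 0) :=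
    hc.continuousOn_tsum_comp (m := fun k => k) strictMono_id
  have hcont : ∀ j, ContinuousOn (fun s => ∑' k, c s (m j + 1 + (k + 1)) * c s (k + 1)
      - c s (m j + 1) * ∑' k, c s (k + 1)) (Icc 0 t) := fun j =>
    ((hc.continuousOn_tsum_shift_mul (m j + 1)).sub ((hc.continuousOn_Ici (m j)).mul hν)).mono
      Icc_subset_Ici_self
  have hsum := fun s (hs : s ∈ Ioc 0 t) => summable_norm_comp_shift_mul_sub_mul_tsum
    (g := fun i => c s (i + 1)) (hc.memX1plus hs.1.le).1 (hc.memX1plus hs.1.le).summable hm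
  have hK : ∀ s ∈ Ioc 0 t, ∑' j, ‖∑' k, c s (m j + 1 + (k + 1)) * c s (k + 1)
      - c s (m j + 1) * ∑' k, c s (k + 1)‖ ≤ 2 * B ^ 2 := fun s hs => by
    have h := hc.memX1plus hs.1.le
    refine (tsum_norm_comp_shift_mul_sub_mul_tsum_le (g := fun i => c s (i + 1)) h.1 h.summable
      hm).trans ?_
    gcongr
    · exact tsum_nonneg h.1
    · exact h.tsum_le_norm1.trans (hB s hs.1.le)
  have hst : Summable (fun j => c t (m j + 1)) := (hc.memX1plus ht).summable.comp_injective hm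
  have hs0 : Summable (fun j => c 0 (m j + 1)) := (hc.memX1plus le_rfl).summable.comp_injective hm
  rw [intervalIntegral_tsum_of_tsum_norm_le ht hcont hsum hK, ← sub_eq_iff_eq_add',
    ← hst.tsum_sub hs0]
  exact tsum_congr fun j => by rw [hc.eq_add_integral (m j) ht]; ring

theorem tsum_eq_add_integral (hc : IsMildSolution (fun _ _ => 1) ⊤ c) {t : ℝ} (ht : 0 ≤ t) :
    ∑' j, c t (j + 1) = ∑' j, c 0 (j + 1) + ∫ s in (0 : ℝ)..t,
      -((∑' k, c s (k + 1)) ^ 2 + ∑' k, c s (k + 1) * c s (k + 1)) / 2 := by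
  rw [hc.tsum_comp_eq_add_integral (m := fun j => j) injective_id ht]
  refine congrArg _ (intervalIntegral.integral_congr fun s hs => ?_)
  rw [uIcc_of_le ht] at hs
  exact tsum_shift_mul_sub_mul_tsum (g := fun i => c s (i + 1)) (hc.memX1plus hs.1).summable_norm

theorem tsum_odd_eq_add_integral (hc : IsMildSolution (fun _ _ => 1) ⊤ c) {t : ℝ} (ht : 0 ≤ t) :
    ∑' j, c t (2 * j + 1) = ∑' j, c 0 (2 * j + 1) + ∫ s in (0 : ℝ)..t,
      -(∑' j, c s (2 * j + 1)) ^ 2 := by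
  rw [hc.tsum_comp_eq_add_integral (m := (2 * ·)) (fun a b h => by simpa using h) ht]
  refine congrArg _ (intervalIntegral.integral_congr fun s hs => ?_)
  rw [uIcc_of_le ht] at hs
  exact tsum_odd_shift_mul_sub_mul_tsum (g := fun i => c s (i + 1))
    (hc.memX1plus hs.1).summable_norm

end IsMildSolution

/-- for constant coefficients `a_{j,k} = 1` and a mild solution
on `[0,∞)`, with `ν(t) = Σ_j c_j(t)` and `ν_odd(t) = Σ_j c_{2j−1}(t)`:
(a) `ν_odd(t) = ν_odd(0)/(1 + ν_odd(0) t)`;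
(b) `ν(0)/(1 + ν(0) t) ≤ ν(t) ≤ ν(0)/(1 + (ν(0)/2) t)`. -/
theorem rbk_constant_kernel_number_asymptotics
    (c : ℝ → ℕ → ℝ) (hc : IsMildSolution (fun _ _ => (1 : ℝ)) ⊤ c)
    (t : ℝ) (ht : 0 ≤ t) :
    ((∑' j : ℕ, c t (2 * j + 1)) =
        (∑' j : ℕ, c 0 (2 * j + 1)) / (1 + (∑' j : ℕ, c 0 (2 * j + 1)) * t)) ∧
    ((∑' j : ℕ, c 0 (j + 1)) / (1 + (∑' j : ℕ, c 0 (j + 1)) * t) ≤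
        ∑' j : ℕ, c t (j + 1)) ∧
    ((∑' j : ℕ, c t (j + 1)) ≤
        (∑' j : ℕ, c 0 (j + 1)) / (1 + ((∑' j : ℕ, c 0 (j + 1)) / 2) * t)) := by
  have hν := hc.continuousOn_tsum_comp (m := fun j => j) strictMono_id
  have hodd := hc.continuousOn_tsum_comp (m := (2 * ·)) (strictMono_mul_left_of_pos two_pos)
  have hQ : ContinuousOn (fun s => ∑' k, c s (k + 1) * c s (k + 1)) (Ici 0) := by
    simpa using hc.continuousOn_tsum_shift_mul 0
  have hν0 : ∀ u ≥ 0, 0 ≤ ∑' j, c u (j + 1) := fun u hu => tsum_nonneg (hc.memX1plus hu).1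
  have hodd0 : ∀ u ≥ 0, 0 ≤ ∑' j, c u (2 * j + 1) := fun u hu =>
    tsum_nonneg fun j => (hc.memX1plus hu).1 _
  have hrate : ContinuousOn
      (fun s => -((∑' k, c s (k + 1)) ^ 2 + ∑' k, c s (k + 1) * c s (k + 1)) / 2) (Ici 0) :=
    ((hν.pow 2).add hQ).neg.div_const 2
  refine ⟨le_antisymm ?_ ?_, ?_, ?_⟩
  · simpa using le_div_one_add_mul_of_eq_add_integral hodd (hodd.pow 2).neg
      (fun u hu => hc.tsum_odd_eq_add_integral hu) hodd0 zero_le_one (fun u _ => by simp) ht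
  · simpa using div_one_add_mul_le_of_eq_add_integral hodd (hodd.pow 2).neg
      (fun u hu => hc.tsum_odd_eq_add_integral hu) hodd0 zero_le_one (fun u _ => by simp) ht
  · simpa using div_one_add_mul_le_of_eq_add_integral hν hrate
      (fun u hu => hc.tsum_eq_add_integral hu) hν0 zero_le_one (fun u hu => by
        have := tsum_mul_self_le_sq_tsum (hc.memX1plus hu).1 (hc.memX1plus hu).summable
        linarith) ht
  · have := le_div_one_add_mul_of_eq_add_integral hν hrate
      (fun u hu => hc.tsum_eq_add_integral hu) hν0 (κ := 1 / 2) (by norm_num) (fun u hu => by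
        have : 0 ≤ ∑' k, c u (k + 1) * c u (k + 1) := tsum_nonneg fun k => mul_self_nonneg _
        linarith) ht
    convert this using 3
    ring
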